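/- Let R be a commutative Noetherian ring and let I and E be injective R-modules. Then the R-module Hom_R(I, E) is flat and cotorsion; that is, Hom_R(I, E) is a flat R-module and Ext^1_R(F, Hom_R(I, E)) = 0 for every flat R-module F. -/

import Mathlib

/-!
STATEMENT 2: Let `R` be a commutative Noetherian ring and `I`, `E` injective `R`-modules.
Then `Hom_R(I, E)` is a flat and cotorsion `R`-module, i.e. it is flat and
`Ext¹_R(F, Hom_R(I,E)) = 0` for every flat `R`-module `F`.

The vanishing of the (Yoneda) group `Ext¹(A, B)` is expressed by the (equivalent)
statement that every short exact sequence `0 → B → E → A → 0` splits.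
-/

universe u

open CategoryTheory Limits

/-- Vanishing of (Yoneda) `Ext¹(A, B)` in an abelian category: every short exact
sequence `0 → B → E → A → 0` splits. -/
def Ext1Vanishes {C : Type*} [Category C] [Abelian C] (A B : C) : Prop :=
  ∀ (E : C) (f : B ⟶ E) (g : E ⟶ A) (w : f ≫ g = 0),
    (ShortComplex.mk f g w).ShortExact → ∃ s : A ⟶ E, s ≫ g = 𝟙 A

/-- An `R`-module `M` is cotorsion if `Ext¹_R(F, M) = 0` for every flat `R`-module `F`. -/
def IsCotorsion (R : Type u) [CommRing R] (M : Type u) [AddCommGroup M] [Module R M] : Prop :=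
  ∀ F : ModuleCat.{u} R, Module.Flat R F → Ext1Vanishes F (ModuleCat.of R M)

/-!
For a finitely presented module `N`, the natural map `N ⊗ Hom(I, E) → Hom(Hom(N, I), E)` is an
isomorphism: both sides are right exact in `N` (the right-hand side because `E` is injective) and
they agree on finite free modules. Over a Noetherian ring every ideal `J` is finitely presented,
so `J ⊗ Hom(I, E) → R ⊗ Hom(I, E)` becomes `Hom(Hom(J, I), E) → Hom(Hom(R, I), E)`, which is
injective because `Hom(R, I) → Hom(J, I)` is onto when `I` is injective; hence `Hom(I, E)` is flat.

For cotorsion, let `0 → Hom(I, E) → X → F → 0` be exact with `F` flat. Then `I ⊗ Hom(I, E) → I ⊗ X`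
is injective, so evaluation `I ⊗ Hom(I, E) → E` extends to `I ⊗ X → E`, whose adjoint
`X → Hom(I, E)` is a retraction of the inclusion.
-/

open TensorProduct LinearMap

section TensorHomToHomHom

variable {R : Type*} [CommRing R] {I E : Type*} [AddCommGroup I] [Module R I]
  [AddCommGroup E] [Module R E]

noncomputable def tensorHomToHomHom (A : Type*) [AddCommGroup A] [Module R A] :
    A ⊗[R] (I →ₗ[R] E) →ₗ[R] (A →ₗ[R] I) →ₗ[R] E :=
  lift ((llcomp R (A →ₗ[R] I) I E).flip ∘ₗ applyₗ)

@[simp] lemma tensorHomToHomHom_tmul {A : Type*} [AddCommGroup A] [Module R A] (a : A)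
    (f : I →ₗ[R] E) (g : A →ₗ[R] I) : tensorHomToHomHom A (a ⊗ₜ f) g = f (g a) := rfl

lemma lcomp_lcomp_comp_tensorHomToHomHom {A B : Type*} [AddCommGroup A] [Module R A]
    [AddCommGroup B] [Module R B] (φ : A →ₗ[R] B) :
    lcomp R E (lcomp R I φ) ∘ₗ tensorHomToHomHom A =
      tensorHomToHomHom B ∘ₗ φ.rTensor (I →ₗ[R] E) :=
  TensorProduct.ext' fun _ _ ↦ rfl

lemma tensorHomToHomHom_bijective_pi (ι : Type*) [Fintype ι] [DecidableEq ι] :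
    Function.Bijective (tensorHomToHomHom (R := R) (I := I) (E := E) (ι → R)) := by
  let e := TensorProduct.comm R (ι → R) (I →ₗ[R] E) ≪≫ₗ piScalarRight R R (I →ₗ[R] E) ι ≪≫ₗ
    lsum R (fun _ ↦ I) R ≪≫ₗ LinearEquiv.congrLeft E R (Module.piEquiv ι R I)
  suffices tensorHomToHomHom (ι → R) = e.toLinearMap from this ▸ e.bijective
  refine TensorProduct.ext' fun a f ↦ LinearMap.ext fun g ↦ ?_
  conv_lhs => rw [tensorHomToHomHom_tmul, ← Finset.univ_sum_single a]
  simp [e, Module.piEquiv, map_sum, ← map_smul, ← Pi.single_smul]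

end TensorHomToHomHom

section Injective

variable {R : Type u} [CommRing R] {E : Type u} [AddCommGroup E] [Module R E]
  [Module.Injective R E]

lemma LinearMap.lcomp_surjective_of_injective {A B : Type u} [AddCommGroup A] [Module R A]
    [AddCommGroup B] [Module R B] (f : A →ₗ[R] B) (hf : Function.Injective f) :
    Function.Surjective (lcomp R E f) :=
  fun g ↦ Module.Injective.out f hf g |>.imp fun _ hh ↦ LinearMap.ext hh

lemma Function.Exact.lcomp_of_injective_module {A B C : Type u} [AddCommGroup A] [Module R A]
    [AddCommGroup B] [Module R B] [AddCommGroup C] [Module R C] {f : A →ₗ[R] B} {g : B →ₗ[R] C}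
    (hfg : Function.Exact f g) : Function.Exact (lcomp R E g) (lcomp R E f) := by
  have hf : Function.Exact f g.rangeRestrict :=
    (range g).injective_subtype.comp_exact_iff_exact.mp hfg
  have hg : lcomp R E g = lcomp R E g.rangeRestrict ∘ₗ lcomp R E (range g).subtype := rfl
  rw [hg, (lcomp_surjective_of_injective _ (range g).injective_subtype).comp_exact_iff_exact]
  exact exact_lcomp_of_exact_of_surjective E hf g.surjective_rangeRestrict

variable {I : Type u} [AddCommGroup I] [Module R I]

theorem tensorHomToHomHom_bijective (N : Type u) [AddCommGroup N] [Module R N]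
    [Module.FinitePresentation R N] :
    Function.Bijective (tensorHomToHomHom (R := R) (I := I) (E := E) N) := by
  obtain ⟨n, m, q, p, hq, hpq⟩ := Module.FinitePresentation.exists_fin' R N
  exact bijective_of_surjective_of_bijective_of_right_exact _ _ _ _ _ _ _
    (lcomp_lcomp_comp_tensorHomToHomHom p) (lcomp_lcomp_comp_tensorHomToHomHom q)
    (rTensor_exact _ hpq hq)
    (exact_lcomp_of_exact_of_surjective I hpq hq).lcomp_of_injective_module
    (tensorHomToHomHom_bijective_pi _).2 (tensorHomToHomHom_bijective_pi _)
    (rTensor_surjective _ hq)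
    (lcomp_surjective_of_injective _ (lcomp_injective_of_surjective _ hq))

theorem Module.flat_linearMap_of_injective [IsNoetherianRing R] [Module.Injective R I] :
    Module.Flat R (I →ₗ[R] E) := by
  refine Module.Flat.iff_rTensor_injective'.mpr fun J ↦ ?_
  have : Module.FinitePresentation R J := Module.finitePresentation_of_finite R J
  have hJ : Function.Injective (lcomp R E (lcomp R I J.subtype)) :=
    lcomp_injective_of_surjective _ (lcomp_surjective_of_injective _ J.injective_subtype)
  refine Function.Injective.of_comp (f := tensorHomToHomHom (I := I) (E := E) R) ?_
  rw [← coe_comp, ← lcomp_lcomp_comp_tensorHomToHomHom, coe_comp]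
  exact hJ.comp (tensorHomToHomHom_bijective J).1

lemma exists_retraction_of_lTensor_injective {X : Type u} [AddCommGroup X] [Module R X]
    (f : (I →ₗ[R] E) →ₗ[R] X) (hf : Function.Injective (f.lTensor I)) :
    ∃ r : X →ₗ[R] I →ₗ[R] E, r ∘ₗ f = LinearMap.id := by
  obtain ⟨ψ, hψ⟩ := Module.Injective.out _ hf (lift (applyₗ (R := R) (M := I) (M₂ := E)))
  exact ⟨(curry ψ).flip, LinearMap.ext fun h ↦ LinearMap.ext fun i ↦ hψ (i ⊗ₜ h)⟩

theorem isCotorsion_linearMap_of_injective : IsCotorsion R (I →ₗ[R] E) := by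
  intro F _ X f g w hS
  have hfg := (ShortComplex.ShortExact.moduleCat_exact_iff_function_exact _).mp hS.exact
  obtain ⟨r, hr⟩ := exists_retraction_of_lTensor_injective f.hom
    (lTensor_injective_of_exact_of_flat g.hom hS.moduleCat_surjective_g f.hom
      hS.moduleCat_injective_f hfg I)
  let s := ShortComplex.Splitting.ofExactOfRetraction _ hS.exact (ModuleCat.ofHom r)
    (ModuleCat.hom_ext hr) hS.epi_g
  exact ⟨s.s, s.s_g⟩

end Injective

theorem flat_and_cotorsion_hom_of_injectives (R : Type u) [CommRing R] [IsNoetherianRing R]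
    (I E : Type u) [AddCommGroup I] [Module R I] [AddCommGroup E] [Module R E]
    (hI : Module.Injective R I) (hE : Module.Injective R E) :
    Module.Flat R (I →ₗ[R] E) ∧ IsCotorsion R (I →ₗ[R] E) :=
  ⟨Module.flat_linearMap_of_injective, isCotorsion_linearMap_of_injective⟩
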